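/- Let p be an odd prime and let P be a finite Camina p-group of nilpotence class 2. Then the p-th power map induces a group isomorphism from P/Ω₁(P) onto ℧₁(P); moreover, P' ≤ Ω₁(P) and ℧₁(P) ≤ P', and ℧₁(P) is elementary abelian. -/

import Mathlib

/-- A group is a Camina group if the conjugacy class of every element outside the
commutator subgroup equals its left coset of the commutator subgroup. -/
def IsCamina (G : Type*) [Group G] : Prop :=
  ∀ g : G, g ∉ commutator G →
    {x : G | IsConj g x} = {x : G | ∃ c ∈ commutator G, x = g * c}

/-- A group has nilpotence class exactly 2: it is nonabelian and its commutator
subgroup is central. -/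
def IsClassTwo (G : Type*) [Group G] : Prop :=
  (∃ a b : G, a * b ≠ b * a) ∧ commutator G ≤ Subgroup.center G

/-- `℧₁(G)`: the subgroup generated by the `p`-th powers. -/
def agemo (p : ℕ) (G : Type*) [Group G] : Subgroup G :=
  Subgroup.closure {x : G | ∃ g : G, g ^ p = x}

/-- `Ω₁(G)`: the subgroup generated by the elements of order dividing `p`. -/
def omega1 (p : ℕ) (G : Type*) [Group G] : Subgroup G :=
  Subgroup.closure {x : G | x ^ p = 1}

/-- The set of irreducible complex characters of `G`. -/
def IrrChar (G : Type) [Group G] : Set (G → ℂ) :=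
  {χ | ∃ V : FDRep ℂ G, CategoryTheory.Simple V ∧ χ = FDRep.character V}

/-- Two groups form a Brauer pair: they are nonisomorphic, and there are bijections
between conjugacy classes and between irreducible characters compatible with character
values and with all power maps. -/
def IsBrauerPair (G H : Type) [Group G] [Group H] : Prop :=
  ¬ Nonempty (G ≃* H) ∧
  ∃ (f : ConjClasses G ≃ ConjClasses H) (e : IrrChar G ≃ IrrChar H),
    (∀ χ : IrrChar G, ∀ g : G, ∀ h : H,
      f (ConjClasses.mk g) = ConjClasses.mk h → χ.1 g = (e χ).1 h) ∧
    (∀ (n : ℤ) (g : G) (h : H),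
      f (ConjClasses.mk g) = ConjClasses.mk h →
        f (ConjClasses.mk (g ^ n)) = ConjClasses.mk (h ^ n))

/-! If some `g ^ p` lay outside `P'`, the Camina property would make its class the whole coset
`g ^ p P'`; in class 2 the conjugates of `g ^ p` are the `g ^ p [g, u] ^ p`, so `x ↦ x ^ p` would
map the nontrivial `p`-group `P'` onto itself, which Cauchy's theorem forbids. So `p`-th powers
lie in `P' ≤ Z(P)`, whence `[b, a] ^ p = 1`. As `p ∣ p.choose 2` for odd `p`, the class-2 identity
`(x y) ^ p = x ^ p y ^ p [y, x] ^ (p.choose 2)` makes `x ↦ x ^ p` a homomorphism, with kernel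
`Ω₁(P)` and image `℧₁(P)`. -/

open scoped commutatorElement

theorem Odd.dvd_choose_two {n : ℕ} (hn : Odd n) : n ∣ n.choose 2 := by
  obtain ⟨k, rfl⟩ := hn
  refine ⟨k, ?_⟩
  rw [Nat.choose_two_right, Nat.add_sub_cancel, mul_left_comm, Nat.mul_div_cancel_left _ two_pos]

theorem not_surjective_pow_of_prime_dvd_card {H : Type*} [Group H] [Finite H] {p : ℕ}
    (hp : p.Prime) (hdvd : p ∣ Nat.card H) : ¬ Function.Surjective (fun x : H => x ^ p) := by
  intro hsurj
  have := Fact.mk hp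
  obtain ⟨t, ht⟩ := exists_prime_orderOf_dvd_card' p hdvd
  have ht1 : t = 1 := Finite.injective_iff_surjective.mpr hsurj <| by
    simp only [← ht, pow_orderOf_eq_one, one_pow]
  exact hp.ne_one (by rw [← ht, ht1, orderOf_one])

theorem IsPGroup.prime_dvd_card_commutator {p : ℕ} {G : Type*} [Group G] (hG : IsPGroup p G)
    (hp : p.Prime) (hnc : ∃ a b : G, a * b ≠ b * a) : p ∣ Nat.card (commutator G) := by
  have := Fact.mk hp
  refine (hG.to_subgroup _).card_eq_or_dvd.resolve_left fun h => ?_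
  obtain ⟨a, b, hab⟩ := hnc
  rw [Subgroup.card_eq_one, commutator_eq_bot_iff, isMulCommutative_iff] at h
  exact hab (h a b)

section CentralCommutator

variable {G : Type*} [Group G] {x y c : G}

theorem pow_mul_eq_of_mul_eq_mul_mul_central (hc : c ∈ Subgroup.center G)
    (hyx : y * x = x * y * c) (n : ℕ) : y ^ n * x = x * y ^ n * c ^ n := by
  induction n with
  | zero => simp
  | succ n ih =>
    calc y ^ (n + 1) * x = (y * x) * y ^ n * c ^ n := by
          rw [pow_succ', mul_assoc, ih]; group
    _ = x * y ^ (n + 1) * c ^ (n + 1) := by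
          rw [hyx, mul_assoc (x * y) c, (hc.comm _).eq, pow_succ', pow_succ']; group

theorem mul_pow_eq_of_mul_eq_mul_mul_central (hc : c ∈ Subgroup.center G)
    (hyx : y * x = x * y * c) (n : ℕ) : (x * y) ^ n = x ^ n * y ^ n * c ^ n.choose 2 := by
  induction n with
  | zero => simp
  | succ n ih =>
    calc (x * y) ^ (n + 1) = x ^ n * (y ^ n * x) * y * c ^ n.choose 2 := by
          rw [pow_succ, ih, mul_assoc _ (c ^ _), ((Subgroup.pow_mem _ hc _).comm _).eq]; group
    _ = x ^ n * x * y ^ n * (c ^ n * y) * c ^ n.choose 2 := by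
          rw [pow_mul_eq_of_mul_eq_mul_mul_central hc hyx]; group
    _ = x ^ (n + 1) * y ^ (n + 1) * c ^ (n + 1).choose 2 := by
          rw [((Subgroup.pow_mem _ hc _).comm _).eq, Nat.choose_succ_succ, Nat.choose_one_right]
          group

end CentralCommutator

section ClassTwo

variable {G : Type*} [Group G]

theorem commutatorElement_mem_center (h2 : commutator G ≤ Subgroup.center G) (a b : G) :
    ⁅a, b⁆ ∈ Subgroup.center G :=
  h2 (Subgroup.commutator_mem_commutator (Subgroup.mem_top a) (Subgroup.mem_top b))

theorem mul_eq_mul_mul_commutatorElement (h2 : commutator G ≤ Subgroup.center G) (x y : G) :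
    y * x = x * y * ⁅y, x⁆ := by
  rw [← ((commutatorElement_mem_center h2 y x).comm _).eq, commutatorElement_def]; group

theorem commutatorElement_pow_eq_one_of_pow_mem_center (h2 : commutator G ≤ Subgroup.center G)
    {n : ℕ} {b : G} (hb : b ^ n ∈ Subgroup.center G) (a : G) : ⁅b, a⁆ ^ n = 1 := by
  have h := pow_mul_eq_of_mul_eq_mul_mul_central (commutatorElement_mem_center h2 b a)
    (mul_eq_mul_mul_commutatorElement h2 a b) n
  rw [← (hb.comm a).eq] at h
  simpa using h

theorem mul_pow_of_odd (h2 : commutator G ≤ Subgroup.center G) {n : ℕ} (hn : Odd n)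
    (hc : ∀ a b : G, ⁅a, b⁆ ^ n = 1) (x y : G) : (x * y) ^ n = x ^ n * y ^ n := by
  obtain ⟨k, hk⟩ := hn.dvd_choose_two
  rw [mul_pow_eq_of_mul_eq_mul_mul_central (commutatorElement_mem_center h2 y x)
    (mul_eq_mul_mul_commutatorElement h2 x y), hk, pow_mul, hc, one_pow, mul_one]

end ClassTwo

theorem IsCamina.surjective_pow_commutator {G : Type*} [Group G] (hcam : IsCamina G)
    (h2 : commutator G ≤ Subgroup.center G) {g : G} {n : ℕ} (hg : g ^ n ∉ commutator G) :
    Function.Surjective (fun c : commutator G => c ^ n) := by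
  rintro ⟨d, hd⟩
  have hconj : g ^ n * d ∈ {x : G | IsConj (g ^ n) x} := by
    rw [hcam _ hg]; exact ⟨d, hd, rfl⟩
  obtain ⟨u, hu⟩ := isConj_iff.mp hconj
  have h := pow_mul_eq_of_mul_eq_mul_mul_central (commutatorElement_mem_center h2 g u⁻¹)
    (mul_eq_mul_mul_commutatorElement h2 u⁻¹ g) n
  rw [mul_assoc, h, ← mul_assoc, ← mul_assoc, mul_inv_cancel, one_mul] at hu
  exact ⟨⟨⁅g, u⁻¹⁆, Subgroup.commutator_mem_commutator (Subgroup.mem_top g) (Subgroup.mem_top _)⟩,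
    Subtype.ext (mul_left_cancel hu)⟩

theorem IsCamina.pow_mem_commutator {G : Type*} [Group G] [Finite G] (hcam : IsCamina G)
    (h2 : commutator G ≤ Subgroup.center G) {p : ℕ} (hp : p.Prime)
    (hdvd : p ∣ Nat.card (commutator G)) (g : G) : g ^ p ∈ commutator G := by
  by_contra hg
  exact not_surjective_pow_of_prime_dvd_card hp hdvd (hcam.surjective_pow_commutator h2 hg)

theorem omega1_eq_ker {G : Type*} [Group G] {p : ℕ} (f : G →* G) (hf : ∀ x, f x = x ^ p) :
    omega1 p G = f.ker := by
  rw [omega1, ← f.ker.closure_eq]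
  congr 1; ext x; simp [hf]

theorem agemo_eq_range {G : Type*} [Group G] {p : ℕ} (f : G →* G) (hf : ∀ x, f x = x ^ p) :
    agemo p G = f.range := by
  rw [agemo, ← f.range.closure_eq]
  congr 1; ext x; simp [hf]

/-- For a Camina `p`-group `P` of nilpotence class 2 (`p` odd), the `p`-th power map
induces an isomorphism `P/Ω₁(P) ≃ ℧₁(P)` (expressed here by: `Ω₁(P)` is normal and
the `p`-th power map is a surjective homomorphism onto `℧₁(P)` with kernel `Ω₁(P)`);
moreover `P' ≤ Ω₁(P)`, `℧₁(P) ≤ P'`, and `℧₁(P)` is elementary abelian. -/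
theorem pow_induces_iso_quotient_omega {p : ℕ} (hp : p.Prime) (hodd : Odd p)
    (P : Type*) [Group P] [Finite P] (hPp : IsPGroup p P)
    (hPcam : IsCamina P) (hP2 : IsClassTwo P) :
    (omega1 p P).Normal ∧
    (∃ ν : P →* (agemo p P),
        (∀ x : P, (ν x : P) = x ^ p) ∧
        Function.Surjective ν ∧ ν.ker = omega1 p P) ∧
    commutator P ≤ omega1 p P ∧
    agemo p P ≤ commutator P ∧
    (∀ x y : P, x ∈ agemo p P → y ∈ agemo p P → x * y = y * x) ∧
    (∀ x ∈ agemo p P, x ^ p = 1) := by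
  obtain ⟨hnonab, h2⟩ := hP2
  have hpow_mem : ∀ g : P, g ^ p ∈ commutator P :=
    hPcam.pow_mem_commutator h2 hp (hPp.prime_dvd_card_commutator hp hnonab)
  have hcomm_pow : ∀ a b : P, ⁅a, b⁆ ^ p = 1 := fun a b =>
    commutatorElement_pow_eq_one_of_pow_mem_center h2 (h2 (hpow_mem a)) b
  let ν : P →* P := MonoidHom.mk' (· ^ p) (mul_pow_of_odd h2 hodd hcomm_pow)
  have hΩ : omega1 p P = ν.ker := omega1_eq_ker ν fun _ => rfl
  have h℧ : agemo p P = ν.range := agemo_eq_range ν fun _ => rfl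
  have h℧_le : agemo p P ≤ commutator P := by
    rw [h℧]; rintro _ ⟨g, rfl⟩; exact hpow_mem g
  have hcomm_le : commutator P ≤ omega1 p P := by
    rw [hΩ, commutator_eq_closure, Subgroup.closure_le]
    rintro _ ⟨a, b, rfl⟩
    exact hcomm_pow a b
  refine ⟨hΩ ▸ ν.normal_ker, ⟨ν.codRestrict _ fun x => h℧ ▸ ⟨x, rfl⟩, fun _ => rfl,
    ?_, by rw [MonoidHom.ker_codRestrict, hΩ]⟩, hcomm_le, h℧_le,
    fun x y hx _ => ((h2 (h℧_le hx)).comm y).eq, fun x hx => ?_⟩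
  · rintro ⟨y, hy⟩
    rw [h℧] at hy
    obtain ⟨x, rfl⟩ := hy
    exact ⟨x, rfl⟩
  · exact (hΩ ▸ hcomm_le (h℧_le hx) : x ∈ ν.ker)
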